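/- arXiv:2501.05436 — 2 statements merged into one kernel-verified Lean document; each statement's English description precedes it below -/
import Mathlib

section
/- Let Δ be a symmetric negative semidefinite operator on ℝ^n and K ∈ ℝ^n. Define, for s > 0, Δ_s = s^{-2}Δ and K_s = s^{-1}K, and let D_s(α) be the unique solution of (-Δ_s + αI)D = K_s for α > 0. Then for all s > 0 and α > 0: s^{-1} · D_s(s^{-2}α) = D_1(α). -/
open scoped RealInnerProductSpace

/-- (Theorem 1 of the paper, discrete form.) With `Δ_s = s⁻²Δ`,
`K_s = s⁻¹K`, and `D_s(α)` the unique solution of `(-Δ_s + αI) D = K_s`,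
one has `s⁻¹ • D_s(s⁻²α) = D_1(α)` for all `s > 0` and `α > 0`. -/
theorem dpf_is_scale_controlled
    {V : Type*} [NormedAddCommGroup V] [InnerProductSpace ℝ V]
    [FiniteDimensional ℝ V] (Δ : V →ₗ[ℝ] V)
    (hsym : ∀ u v : V, ⟪Δ u, v⟫ = ⟪u, Δ v⟫)
    (hnsd : ∀ v : V, ⟪Δ v, v⟫ ≤ 0)
    (K : V) (s α : ℝ) (hs : 0 < s) (hα : 0 < α)
    (D₁ Ds : V)
    (hD₁ : α • D₁ - Δ D₁ = K)
    (hDs : (s⁻¹ ^ 2 * α) • Ds - (s⁻¹ ^ 2) • Δ Ds = s⁻¹ • K) :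
    s⁻¹ • Ds = D₁ := by
  set x : V := s⁻¹ • Ds with hx
  have hs' : s ≠ 0 := ne_of_gt hs
  -- x satisfies the same equation as D₁
  have hx' : α • x - Δ x = K := by
    have := congrArg (fun v => s • v) hDs
    simp only [smul_sub, smul_smul] at this
    rw [hx, map_smul]
    have h1 : s * (s⁻¹ ^ 2 * α) = α * s⁻¹ := by
      field_simp
    have h2 : s * s⁻¹ ^ 2 = s⁻¹ := by
      field_simp
    have h3 : s * s⁻¹ = 1 := mul_inv_cancel₀ hs'
    rw [h1, h2, h3, one_smul] at this
    rw [smul_smul, mul_comm α s⁻¹, mul_comm s⁻¹ α]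
    exact this
  -- uniqueness: let w = x - D₁
  set w : V := x - D₁ with hw
  have hweq : α • w - Δ w = 0 := by
    rw [hw, map_sub, smul_sub]
    rw [sub_sub_sub_comm] at *
    rw [hx', hD₁, sub_self]
  have hinner : α * ⟪w, w⟫ - ⟪Δ w, w⟫ = 0 := by
    have := congrArg (fun v => ⟪v, w⟫) hweq
    simpa [inner_sub_left, real_inner_smul_left] using this
  have hw0 : w = 0 := by
    by_contra h
    have hpos : 0 < ⟪w, w⟫ := by
      rw [real_inner_self_eq_norm_sq]
      exact pow_pos (norm_pos_iff.mpr h) 2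
    have : 0 < α * ⟪w, w⟫ - ⟪Δ w, w⟫ :=
      sub_pos.mpr (lt_of_le_of_lt (hnsd w) (mul_pos hα hpos))
    linarith [hinner]
  have := sub_eq_zero.mp (hw ▸ hw0)
  simpa [hx] using this
end

section
/- Let A be symmetric negative semidefinite on ℝ^n, α > 0, k, k' ∈ ℝ^n, and D(k) = (-A + αI)^{-1}k. Then ‖D(k) − D(k')‖ ≤ ‖k − k'‖/α; i.e. the DPF solution map is Lipschitz in the curvature input with constant 1/α. -/
open scoped RealInnerProductSpace

/-- The DPF solution map `k ↦ (-A + αI)⁻¹ k` is Lipschitz with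
constant `1/α`: if `(-A + αI) d = k` and `(-A + αI) d' = k'`, then
`‖d - d'‖ ≤ ‖k - k'‖ / α`. -/
theorem dpf_lipschitz_in_curvature
    {V : Type*} [NormedAddCommGroup V] [InnerProductSpace ℝ V]
    [FiniteDimensional ℝ V] (A : V →ₗ[ℝ] V)
    (hsym : ∀ u v : V, ⟪A u, v⟫ = ⟪u, A v⟫)
    (hnsd : ∀ v : V, ⟪A v, v⟫ ≤ 0)
    (α : ℝ) (hα : 0 < α) (k k' d d' : V)
    (hd : α • d - A d = k) (hd' : α • d' - A d' = k') :
    ‖d - d'‖ ≤ ‖k - k'‖ / α := by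
  set e := d - d' with he
  have heq : α • e - A e = k - k' := by
    simp only [he, map_sub, smul_sub]
    rw [← hd, ← hd']; abel
  have key : α * ‖e‖ ^ 2 ≤ ‖k - k'‖ * ‖e‖ := by
    calc α * ‖e‖ ^ 2 = α * ⟪e, e⟫ := by rw [real_inner_self_eq_norm_sq]
      _ ≤ α * ⟪e, e⟫ - ⟪A e, e⟫ := by linarith [hnsd e]
      _ = ⟪α • e - A e, e⟫ := by
          simp [inner_sub_left, real_inner_smul_left]
      _ = ⟪k - k', e⟫ := by rw [heq]
      _ ≤ ‖k - k'‖ * ‖e‖ := real_inner_le_norm _ _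
  rw [le_div_iff₀ hα]
  rcases eq_or_ne e 0 with h0 | h0
  · simp [h0]
  · have hne : 0 < ‖e‖ := norm_pos_iff.mpr h0
    nlinarith [key]
end
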